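/- Completeness of ECN with respect to finite neighborhood frames: for every modal formula A, if A is valid in every finite ECN-frame (i.e., every ECN-frame whose set of worlds is finite), then A is derivable in the logic ECN. -/

import Mathlib

/-- Modal formulas: propositional variables, ⊥, ¬, ∧, ∨, →, □. -/
inductive MF : Type
  | var : ℕ → MF
  | bot : MF
  | neg : MF → MF
  | and : MF → MF → MF
  | or : MF → MF → MF
  | imp : MF → MF → MF
  | box : MF → MF

/-- Defined biconditional A ↔ B := (A → B) ∧ (B → A). -/
def MF.iff (A B : MF) : MF := (A.imp B).and (B.imp A)

/-- Propositional evaluation: variables and boxed formulas are treated as atoms. -/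
def MF.peval (v : MF → Bool) : MF → Bool
  | .var n => v (.var n)
  | .bot => false
  | .neg A => !(A.peval v)
  | .and A B => A.peval v && B.peval v
  | .or A B => A.peval v || B.peval v
  | .imp A B => !(A.peval v) || B.peval v
  | .box A => v A.box

/-- A is a propositional tautology. -/
def MF.Tautology (A : MF) : Prop := ∀ v : MF → Bool, A.peval v = true

/-- The logic ECN: EN plus the axiom scheme □A ∧ □B → □(A ∧ B). -/
inductive ECN : MF → Prop
  | taut {A : MF} : A.Tautology → ECN A
  | axC {A B : MF} : ECN ((A.box.and B.box).imp (A.and B).box)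
  | mp {A B : MF} : ECN (A.imp B) → ECN A → ECN B
  | nec {A : MF} : ECN A → ECN A.box
  | re {A B : MF} : ECN (A.iff B) → ECN (A.box.iff B.box)

/-- An EN-frame: a (nonempty) set of worlds `W` together with a neighborhood
function `N` such that the whole universe is a neighborhood of every world. -/
structure ENFrame (W : Type*) where
  N : W → Set (Set W)
  univ_mem : ∀ x : W, (Set.univ : Set W) ∈ N x

/-- The truth set of a modal formula in a model (frame + valuation). -/
def ENFrame.truth {W : Type*} (F : ENFrame W) (val : ℕ → Set W) : MF → Set W
  | .var n => val n
  | .bot => ∅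
  | .neg A => (F.truth val A)ᶜ
  | .and A B => F.truth val A ∩ F.truth val B
  | .or A B => F.truth val A ∪ F.truth val B
  | .imp A B => {x | x ∈ F.truth val A → x ∈ F.truth val B}
  | .box A => {x | F.truth val A ∈ F.N x}

/-- A formula is valid in a frame if it is valid (true at every world) in
every model on that frame. -/
def ENFrame.Valid {W : Type*} (F : ENFrame W) (A : MF) : Prop :=
  ∀ val : ℕ → Set W, F.truth val A = Set.univ

/-- ENP-frame condition: the empty set is never a neighborhood. -/
def ENFrame.IsENP {W : Type*} (F : ENFrame W) : Prop :=
  ∀ x : W, (∅ : Set W) ∉ F.N x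

/-- END-frame condition: no set is a neighborhood together with its complement. -/
def ENFrame.IsEND {W : Type*} (F : ENFrame W) : Prop :=
  ∀ (x : W) (V : Set W), V ∈ F.N x → Vᶜ ∉ F.N x

/-- ECN-frame condition: neighborhoods are closed under intersection. -/
def ENFrame.IsECN {W : Type*} (F : ENFrame W) : Prop :=
  ∀ (x : W) (U V : Set W), U ∈ F.N x → V ∈ F.N x → U ∩ V ∈ F.N x

/-!
Let `S` be the atoms of `A` (variables and boxed formulas), closed under taking the atoms of the
bodies of its boxes. The worlds of the canonical model are the valuations of `S` satisfying every
ECN-theorem over `S`. As `S` has finitely many valuations, a formula over `S` true at every world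
is a theorem: conjoin, for each valuation falsifying it, a theorem that valuation violates. The
neighbourhoods of a world `x` are the finite intersections `‖D₁‖ ∩ … ∩ ‖Dₙ‖` with every `□Dᵢ`
in `S` true at `x`, which makes the frame a finite ECN-frame. In the truth lemma, `‖C‖ = ‖⋀ Dᵢ‖`
for such `Dᵢ` gives `⊢ C ↔ ⋀ Dᵢ`, hence `⊢ ⋀ □Dᵢ → □C` by RE and the axiom C, so `□C` holds at
`x`. Validity of `A` in this frame then makes `A` true at every world, hence a theorem.
-/

namespace MF

def atoms : MF → Set MF
  | .var n => {.var n}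
  | .bot => ∅
  | .neg A => A.atoms
  | .and A B => A.atoms ∪ B.atoms
  | .or A B => A.atoms ∪ B.atoms
  | .imp A B => A.atoms ∪ B.atoms
  | .box A => {A.box}

def boxClosure : MF → Set MF
  | .var n => {.var n}
  | .bot => ∅
  | .neg A => A.boxClosure
  | .and A B => A.boxClosure ∪ B.boxClosure
  | .or A B => A.boxClosure ∪ B.boxClosure
  | .imp A B => A.boxClosure ∪ B.boxClosure
  | .box A => insert A.box A.boxClosure

theorem finite_boxClosure (A : MF) : A.boxClosure.Finite := by
  induction A <;> simp_all [boxClosure]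

theorem atoms_subset_boxClosure (A : MF) : A.atoms ⊆ A.boxClosure := by
  induction A with
  | var n | bot => simp [atoms, boxClosure]
  | neg A ih => exact ih
  | and A B ihA ihB | or A B ihA ihB | imp A B ihA ihB => exact Set.union_subset_union ihA ihB
  | box A => simp [atoms, boxClosure]

theorem atoms_subset_boxClosure_of_box_mem {A C : MF} (h : C.box ∈ A.boxClosure) :
    C.atoms ⊆ A.boxClosure := by
  induction A with
  | var n | bot => simp [boxClosure] at h
  | neg A ih => exact ih h
  | and A B ihA ihB | or A B ihA ihB | imp A B ihA ihB =>
    rcases h with h | h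
    · exact (ihA h).trans Set.subset_union_left
    · exact (ihB h).trans Set.subset_union_right
  | box A ih =>
    rcases h with h | h
    · cases h
      exact (atoms_subset_boxClosure C).trans (Set.subset_insert _ _)
    · exact (ih h).trans (Set.subset_insert _ _)

theorem peval_congr {A : MF} {v w : MF → Bool} (h : ∀ a ∈ A.atoms, v a = w a) :
    A.peval v = A.peval w := by
  induction A <;> simp_all [atoms, peval]

def conj (L : List MF) : MF := L.foldr MF.and MF.bot.neg

theorem peval_conj (L : List MF) (v : MF → Bool) :
    (conj L).peval v = true ↔ ∀ A ∈ L, A.peval v = true := by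
  induction L <;> simp_all [conj, peval]

theorem atoms_conj_subset {L : List MF} {S : Set MF} (h : ∀ A ∈ L, A.atoms ⊆ S) :
    (conj L).atoms ⊆ S := by
  induction L <;> simp_all [conj, atoms]

end MF

namespace ECN

theorem of_entails {A B : MF} (h : ∀ v, A.peval v = true → B.peval v = true) (hA : ECN A) :
    ECN B :=
  ECN.mp (ECN.taut fun v => by grind [MF.peval]) hA

theorem and_intro {A B : MF} (hA : ECN A) (hB : ECN B) : ECN (A.and B) :=
  have taut : (A.imp (B.imp (A.and B))).Tautology := fun v => by
    grind [MF.peval]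
  ((ECN.taut taut).mp hA).mp hB

theorem conj_box_imp_box_conj (L : List MF) : ECN ((MF.conj (L.map .box)).imp (MF.conj L).box) := by
  induction L with
  | nil =>
    have top : ECN (MF.conj []) := ECN.taut fun v => rfl
    exact of_entails (fun v => by grind [MF.peval]) top.nec
  | cons A L ih =>
    show ECN ((A.box.and (MF.conj (L.map .box))).imp (A.and (MF.conj L)).box)
    exact of_entails (fun v => by grind [MF.peval])
      (and_intro ih (ECN.axC (A := A) (B := MF.conj L)))

end ECN

/-- Stands in for a maximal consistent set restricted to the atoms in `S`; vanishing off `S` only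
serves to make the worlds finitely many. -/
@[ext]
structure CanonicalWorld (S : Set MF) where
  val : MF → Bool
  val_eq_false : ∀ a ∉ S, val a = false
  peval_of_ECN : ∀ B, ECN B → B.atoms ⊆ S → B.peval val = true

theorem finite_setOf_forall_notMem_eq_false {S : Set MF} (hS : S.Finite) :
    {v : MF → Bool | ∀ a ∉ S, v a = false}.Finite := by
  refine Set.Finite.of_finite_image (f := fun v => {a | v a = true})
    (hS.finite_subsets.subset ?_) fun v _ w _ hvw => funext fun a => ?_
  · rintro _ ⟨v, hv, rfl⟩ a ha
    by_contra haS
    simp [hv a haS] at ha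
  · exact Bool.eq_iff_iff.mpr (Set.ext_iff.mp hvw a)

theorem finite_canonicalWorld {S : Set MF} (hS : S.Finite) : Finite (CanonicalWorld S) :=
  have := (finite_setOf_forall_notMem_eq_false hS).to_subtype
  Finite.of_injective (fun x => (⟨x.val, x.val_eq_false⟩ : {v : MF → Bool | ∀ a ∉ S, v a = false}))
    fun _ _ h => CanonicalWorld.ext (congrArg Subtype.val h)

theorem exists_ECN_forall_peval_eq_false {S : Set MF} {P : Set (MF → Bool)} (hP : P.Finite)
    (h : ∀ v ∈ P, ∃ B, ECN B ∧ B.atoms ⊆ S ∧ B.peval v = false) :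
    ∃ B, ECN B ∧ B.atoms ⊆ S ∧ ∀ v ∈ P, B.peval v = false := by
  induction P, hP using Set.Finite.induction_on with
  | empty => exact ⟨MF.bot.neg, ECN.taut fun _ => rfl, by simp [MF.atoms], by simp⟩
  | insert _ _ ih =>
    obtain ⟨B, hB, hBS, hBP⟩ := ih fun v hv => h v (Set.mem_insert_of_mem _ hv)
    obtain ⟨C, hC, hCS, hCv⟩ := h _ (Set.mem_insert _ _)
    refine ⟨B.and C, hB.and_intro hC, Set.union_subset hBS hCS, ?_⟩
    rintro v (rfl | hv) <;> simp [MF.peval, *]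

theorem ECN.of_forall_canonicalWorld {S : Set MF} (hS : S.Finite) {A : MF} (hA : A.atoms ⊆ S)
    (h : ∀ x : CanonicalWorld S, A.peval x.val = true) : ECN A := by
  classical
  obtain ⟨B, hB, hBS, hBP⟩ := exists_ECN_forall_peval_eq_false (S := S)
    (P := {v | (∀ a ∉ S, v a = false) ∧ A.peval v = false})
    ((finite_setOf_forall_notMem_eq_false hS).subset fun v hv => hv.1) fun v ⟨hvS, hvA⟩ => by
      by_contra! hv
      simpa [hvA] using h ⟨v, hvS, fun B hB hBS => by simpa using hv B hB hBS⟩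
  refine hB.of_entails fun v hvB => ?_
  let w : MF → Bool := fun a => if a ∈ S then v a else false
  have agree : ∀ a ∈ S, w a = v a := fun a ha => if_pos ha
  by_contra hvA
  have hwB := hBP w ⟨fun a ha => if_neg ha, by
    rw [MF.peval_congr fun a ha => agree a (hA ha)]; simpa using hvA⟩
  rw [MF.peval_congr fun a ha => agree a (hBS ha), hvB] at hwB
  exact Bool.noConfusion hwB

def canonicalFrame (S : Set MF) : ENFrame (CanonicalWorld S) where
  N x := {X | ∃ L : List MF, (∀ C ∈ L, C.box ∈ S ∧ x.val C.box = true) ∧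
    X = {y | (MF.conj L).peval y.val = true}}
  univ_mem _ := ⟨[], by simp, by ext; simp [MF.peval_conj]⟩

theorem canonicalFrame_isECN (S : Set MF) : (canonicalFrame S).IsECN := by
  rintro x _ _ ⟨L, hL, rfl⟩ ⟨M, hM, rfl⟩
  refine ⟨L ++ M, fun C hC => (List.mem_append.mp hC).elim (hL C) (hM C), ?_⟩
  ext y
  simp [MF.peval_conj, or_imp, forall_and]

def canonicalVal (S : Set MF) : ℕ → Set (CanonicalWorld S) :=
  fun n => {x | x.val (.var n) = true}

theorem CanonicalWorld.val_box_of_truthSet_eq_conj {S : Set MF} (hS : S.Finite)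
    (hSbox : ∀ C : MF, C.box ∈ S → C.atoms ⊆ S) {C : MF} (hC : C.box ∈ S) {L : List MF}
    (x : CanonicalWorld S) (hL : ∀ D ∈ L, D.box ∈ S ∧ x.val D.box = true)
    (hCL : {y : CanonicalWorld S | C.peval y.val = true} = {y | (MF.conj L).peval y.val = true}) :
    x.val C.box = true := by
  have hLS : (MF.conj L).atoms ⊆ S := MF.atoms_conj_subset fun D hD => hSbox D (hL D hD).1
  have hiff : ECN (C.iff (MF.conj L)) :=
    ECN.of_forall_canonicalWorld hS (by simp [MF.iff, MF.atoms, hSbox C hC, hLS]) fun y => by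
      have := Set.ext_iff.mp hCL y
      simp only [Set.mem_ofPred_eq] at this
      grind [MF.peval, MF.iff]
  have hder : ECN ((MF.conj (L.map .box)).imp C.box) :=
    ECN.of_entails (fun v => by grind [MF.peval, MF.iff])
      (hiff.re.and_intro (ECN.conj_box_imp_box_conj L))
  have hboxes : (MF.conj (L.map .box)).atoms ⊆ S :=
    MF.atoms_conj_subset fun B hB => by
      obtain ⟨D, hD, rfl⟩ := List.mem_map.mp hB
      simpa [MF.atoms] using (hL D hD).1
  have := x.peval_of_ECN _ hder (Set.union_subset hboxes (by simpa [MF.atoms] using hC))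
  simp only [MF.peval, Bool.or_eq_true, Bool.not_eq_true'] at this
  refine this.resolve_left ?_
  simpa [MF.peval_conj, MF.peval] using fun D hD => (hL D hD).2

theorem truth_canonicalFrame {S : Set MF} (hS : S.Finite)
    (hSbox : ∀ C : MF, C.box ∈ S → C.atoms ⊆ S) {A : MF} (hA : A.atoms ⊆ S) :
    (canonicalFrame S).truth (canonicalVal S) A = {x | A.peval x.val = true} := by
  induction A with
  | var n => rfl
  | bot => ext; simp [ENFrame.truth, MF.peval]
  | neg A ih => ext; simp [ENFrame.truth, MF.peval, ih hA]
  | and A B ihA ihB | or A B ihA ihB | imp A B ihA ihB =>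
    obtain ⟨hA, hB⟩ := Set.union_subset_iff.mp hA
    ext
    simp [ENFrame.truth, MF.peval, ihA hA, ihB hB, imp_iff_not_or]
  | box C ih =>
    have hC : C.box ∈ S := hA rfl
    ext x
    simp only [ENFrame.truth, ih (hSbox C hC), Set.mem_ofPred_eq]
    constructor
    · rintro ⟨L, hL, hCL⟩
      exact x.val_box_of_truthSet_eq_conj hS hSbox hC hL hCL
    · exact fun hx => ⟨[C], by simpa [hC, MF.peval] using hx, by ext; simp [MF.peval_conj]⟩

/-- Completeness of ECN with respect to finite ECN-frames. -/
theorem ECN_completeness (A : MF)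
    (h : ∀ (W : Type) [Nonempty W] [Finite W] (F : ENFrame W), F.IsECN → F.Valid A) :
    ECN A := by
  have hS := A.finite_boxClosure
  refine ECN.of_forall_canonicalWorld hS A.atoms_subset_boxClosure fun x => ?_
  have : Nonempty (CanonicalWorld A.boxClosure) := ⟨x⟩
  have : Finite (CanonicalWorld A.boxClosure) := finite_canonicalWorld hS
  have hvalid := h _ (canonicalFrame _) (canonicalFrame_isECN _) (canonicalVal A.boxClosure)
  rw [truth_canonicalFrame hS (fun _ => MF.atoms_subset_boxClosure_of_box_mem)
    A.atoms_subset_boxClosure] at hvalid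
  exact Set.eq_univ_iff_forall.mp hvalid x
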